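/- Let φ : L → L be a function with φ(a) ≤ a for all a ∈ L. If a proper element q ∈ L is φ-δ₁-primary (where δ₁(a) = √a) and satisfies √(φ(q)) = φ(√q), then √q is a φ-prime element of L. -/

import Mathlib

open CompleteLattice

variable {L : Type*} [CompleteLattice L] [CommMonoid L]

/-- The compactness notion of the older Mathlib (`CompleteLattice.IsCompactElement`). -/
def CompleteLattice.IsCompactElement {α : Type*} [CompleteLattice α] (k : α) :=
  ∀ s : Set α, k ≤ sSup s → ∃ t : Finset α, ↑t ⊆ s ∧ k ≤ t.sup id

/-- `L` is a compactly generated multiplicative lattice: multiplication distributes over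
arbitrary joins, the top element is the multiplicative identity, `1` is a compact element,
every element is a join of compact elements, and products of compact elements are compact. -/
def IsCGMultLattice (L : Type*) [CompleteLattice L] [CommMonoid L] : Prop :=
  (∀ (a : L) (S : Set L), a * sSup S = ⨆ b ∈ S, a * b) ∧
  ((1 : L) = ⊤) ∧
  CompleteLattice.IsCompactElement (1 : L) ∧
  (∀ a : L, a = sSup {x : L | CompleteLattice.IsCompactElement x ∧ x ≤ a}) ∧
  (∀ x y : L, CompleteLattice.IsCompactElement x → CompleteLattice.IsCompactElement y →
    CompleteLattice.IsCompactElement (x * y))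

/-- An expansion function on `L`: `a ≤ δ a` and `δ` is monotone. -/
def IsExpansion (δ : L → L) : Prop :=
  (∀ a : L, a ≤ δ a) ∧ ∀ a b : L, a ≤ b → δ a ≤ δ b

/-- A proper element `p` is `φ`-`δ`-primary if `a*b ≤ p` and `a*b ≰ φ p` imply
`a ≤ p` or `b ≤ δ p`. -/
def IsPhiDeltaPrimary (φ δ : L → L) (p : L) : Prop :=
  p < 1 ∧ ∀ a b : L, a * b ≤ p → ¬ a * b ≤ φ p → a ≤ p ∨ b ≤ δ p

/-- A proper element `p` is `δ`-primary if `a*b ≤ p` implies `a ≤ p` or `b ≤ δ p`. -/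
def IsDeltaPrimary (δ : L → L) (p : L) : Prop :=
  p < 1 ∧ ∀ a b : L, a * b ≤ p → a ≤ p ∨ b ≤ δ p

/-- A proper element `p` is `φ`-prime if `a*b ≤ p` and `a*b ≰ φ p` imply
`a ≤ p` or `b ≤ p`. -/
def IsPhiPrime (φ : L → L) (p : L) : Prop :=
  p < 1 ∧ ∀ a b : L, a * b ≤ p → ¬ a * b ≤ φ p → a ≤ p ∨ b ≤ p

/-- The residual `(a : b)`, the join of all `x` with `x * b ≤ a`. -/
def lres (a b : L) : L := sSup {x : L | x * b ≤ a}

/-- The radical `√a`, the join of all compact `x` with `x ^ n ≤ a` for some `n ≥ 1`. -/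
def lradical (a : L) : L :=
  sSup {x : L | CompleteLattice.IsCompactElement x ∧ ∃ n : ℕ, 0 < n ∧ x ^ n ≤ a}

/-- A principal element of a multiplicative lattice. -/
def IsPrincipalElem (e : L) : Prop :=
  ∀ a b : L, a ⊓ b * e = (lres a e ⊓ b) * e ∧ lres (a * e ⊔ b) e = lres b e ⊔ a

/-- A Noether lattice: modular, principally generated, satisfying the ascending
chain condition. -/
def IsNoetherLattice (L : Type*) [CompleteLattice L] [CommMonoid L] : Prop :=
  IsModularLattice L ∧ (∀ a : L, a = sSup {e : L | IsPrincipalElem e ∧ e ≤ a}) ∧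
  WellFoundedGT L

/-- A maximal element: proper, and `m < x ≤ 1` implies `x = 1`. -/
def IsMaximalElem (m : L) : Prop :=
  m < 1 ∧ ∀ x : L, m < x → x ≤ 1 → x = 1

/-!
For compact `x, y` outside `√q` with `x * y ≤ √q`, some power `(x * y) ^ n = x ^ n * y ^ n` lies
below `q`. If it lies below `φ q`, then `x * y ≤ √(φ q) = φ √q`; otherwise `φ`-`δ₁`-primariness
puts `x ^ n` below `q` or `y ^ n` below `√q`, and either way `x` or `y` lies below `√q` after all.
For arbitrary `a, b` with `a * b ≤ √q` and `a, b ≰ √q`, fix compact `x₀ ≤ a`, `y₀ ≤ b` outside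
`√q`: every product of compacts `x * y` with `x ≤ a`, `y ≤ b` lies below
`(x ⊔ x₀) * (y ⊔ y₀) ≤ φ √q`, and these products generate `a * b`.
-/

section MulSSup

variable (hd : ∀ (a : L) (S : Set L), a * sSup S = ⨆ b ∈ S, a * b)
include hd

theorem mul_sup_of_mul_sSup (a b c : L) : a * (b ⊔ c) = a * b ⊔ a * c := by
  rw [← sSup_pair, hd, iSup_pair]

theorem sup_mul_of_mul_sSup (a b c : L) : (a ⊔ b) * c = a * c ⊔ b * c := by
  simp only [mul_comm _ c, mul_sup_of_mul_sSup hd]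

theorem isOrderedMonoid_of_mul_sSup : IsOrderedMonoid L where
  mul_le_mul_left a b hab c := by
    rw [mul_comm a, mul_comm b, ← sup_eq_right, ← mul_sup_of_mul_sSup hd, sup_eq_right.2 hab]

variable (htop : (1 : L) = ⊤)
include htop

theorem sup_pow_add_le (x y : L) (m n : ℕ) : (x ⊔ y) ^ (m + n) ≤ x ^ m ⊔ y ^ n := by
  have := isOrderedMonoid_of_mul_sSup hd
  have mul_le_left (a b : L) : a * b ≤ a := mul_le_of_le_one_right' (htop ▸ le_top)
  induction m generalizing n with
  | zero => simp [htop]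
  | succ m ihm =>
    induction n with
    | zero => simp [htop]
    | succ n ihn =>
      calc (x ⊔ y) ^ (m + 1 + (n + 1))
          = (x ⊔ y) ^ (m + (n + 1)) * x ⊔ (x ⊔ y) ^ (m + 1 + n) * y := by
            rw [show m + 1 + (n + 1) = m + n + 1 + 1 by omega,
              show m + (n + 1) = m + n + 1 by omega, show m + 1 + n = m + n + 1 by omega,
              pow_succ, mul_sup_of_mul_sSup hd]
        _ ≤ (x ^ m ⊔ y ^ (n + 1)) * x ⊔ (x ^ (m + 1) ⊔ y ^ n) * y :=
            sup_le_sup (mul_le_mul_left (ihm (n + 1)) x) (mul_le_mul_left ihn y)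
        _ ≤ x ^ (m + 1) ⊔ y ^ (n + 1) := by
            rw [sup_mul_of_mul_sSup hd, sup_mul_of_mul_sSup hd, ← pow_succ, ← pow_succ]
            exact sup_le (sup_le_sup_left (mul_le_left _ _) _)
              (sup_le_sup_right (mul_le_left _ _) _)

theorem exists_pow_finsetSup_le (q : L) (t : Finset L)
    (ht : ∀ x ∈ t, ∃ n : ℕ, 0 < n ∧ x ^ n ≤ q) : ∃ n : ℕ, 0 < n ∧ t.sup id ^ n ≤ q := by
  classical
  induction t using Finset.induction_on with
  | empty => exact ⟨1, one_pos, by simp⟩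
  | insert x t _ ih =>
    obtain ⟨m, hm, hxm⟩ := ht x (Finset.mem_insert_self x t)
    obtain ⟨n, -, htn⟩ := ih fun y hy => ht y (Finset.mem_insert_of_mem hy)
    refine ⟨m + n, by omega, ?_⟩
    rw [Finset.sup_insert]
    exact (sup_pow_add_le hd htop x _ m n).trans (sup_le hxm htn)

theorem exists_pow_le_of_le_lradical {x q : L} (hx : CompleteLattice.IsCompactElement x)
    (hxq : x ≤ lradical q) : ∃ n : ℕ, 0 < n ∧ x ^ n ≤ q := by
  have := isOrderedMonoid_of_mul_sSup hd
  obtain ⟨t, hts, hxt⟩ := hx _ hxq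
  obtain ⟨n, hn, htn⟩ := exists_pow_finsetSup_le hd htop q t fun y hy => (hts hy).2
  exact ⟨n, hn, (pow_le_pow_left' hxt n).trans htn⟩

end MulSSup

theorem le_lradical_of_pow_le {x q : L} (hx : CompleteLattice.IsCompactElement x) {n : ℕ}
    (hn : 0 < n) (hxq : x ^ n ≤ q) : x ≤ lradical q :=
  le_sSup ⟨hx, n, hn, hxq⟩

theorem CompleteLattice.IsCompactElement.sup {α : Type*} [CompleteLattice α] {x y : α}
    (hx : CompleteLattice.IsCompactElement x) (hy : CompleteLattice.IsCompactElement y) :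
    CompleteLattice.IsCompactElement (x ⊔ y) := by
  classical
  intro s hs
  obtain ⟨t, hts, hxt⟩ := hx s (le_sup_left.trans hs)
  obtain ⟨u, hus, hyu⟩ := hy s (le_sup_right.trans hs)
  refine ⟨t ∪ u, by simpa using ⟨hts, hus⟩, ?_⟩
  rw [Finset.sup_union]
  exact sup_le_sup hxt hyu

theorem mul_le_of_forall_isCompactElement (hd : ∀ (a : L) (S : Set L), a * sSup S = ⨆ b ∈ S, a * b)
    (hgen : ∀ a : L, a = sSup {x : L | CompleteLattice.IsCompactElement x ∧ x ≤ a}) {a b c : L}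
    (h : ∀ x y : L, CompleteLattice.IsCompactElement x → CompleteLattice.IsCompactElement y →
      x ≤ a → y ≤ b → x * y ≤ c) : a * b ≤ c := by
  rw [hgen a, mul_comm, hd]
  refine iSup₂_le fun x hx => ?_
  rw [hgen b, mul_comm, hd]
  exact iSup₂_le fun y hy => h x y hx.1 hy.1 hx.2 hy.2

theorem exists_isCompactElement_le_not_le {α : Type*} [CompleteLattice α]
    (hgen : ∀ a : α, a = sSup {x : α | CompleteLattice.IsCompactElement x ∧ x ≤ a}) {a c : α}
    (hac : ¬ a ≤ c) : ∃ x, CompleteLattice.IsCompactElement x ∧ x ≤ a ∧ ¬ x ≤ c := by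
  by_contra! h
  exact hac ((hgen a).trans_le (sSup_le fun x hx => h x hx.1 hx.2))

namespace IsCGMultLattice

variable (hL : IsCGMultLattice L)
include hL

theorem isCompactElement_pow {x : L} (hx : CompleteLattice.IsCompactElement x) (n : ℕ) :
    CompleteLattice.IsCompactElement (x ^ n) := by
  obtain ⟨-, -, h1c, -, hmul⟩ := hL
  induction n with
  | zero => simpa using h1c
  | succ n ih => simpa [pow_succ] using hmul _ _ ih hx

theorem lradical_lt_one {q : L} (hq : q < 1) : lradical q < 1 := by
  obtain ⟨hd, htop, h1c, -, -⟩ := hL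
  refine lt_of_le_of_ne (htop ▸ le_top) fun h => hq.ne (le_antisymm hq.le ?_)
  obtain ⟨n, -, hn⟩ := exists_pow_le_of_le_lradical hd htop h1c h.ge
  simpa using hn

theorem le_lradical_of_pow_le_lradical {x q : L} (hx : CompleteLattice.IsCompactElement x) {n : ℕ}
    (hn : 0 < n) (hxq : x ^ n ≤ lradical q) : x ≤ lradical q := by
  have ⟨hd, htop, _⟩ := hL
  obtain ⟨m, hm, hxm⟩ :=
    exists_pow_le_of_le_lradical hd htop (hL.isCompactElement_pow hx n) hxq
  exact le_lradical_of_pow_le hx (Nat.mul_pos hn hm) (by rwa [pow_mul])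

theorem isPhiPrime_of_forall_isCompactElement {φ : L → L} {p : L} (hp : p < 1)
    (h : ∀ x y : L, CompleteLattice.IsCompactElement x → CompleteLattice.IsCompactElement y →
      x * y ≤ p → ¬ x ≤ p → ¬ y ≤ p → x * y ≤ φ p) : IsPhiPrime φ p := by
  obtain ⟨hd, -, -, hgen, -⟩ := hL
  have := isOrderedMonoid_of_mul_sSup hd
  refine ⟨hp, fun a b hab habφ => ?_⟩
  by_contra! hnot
  obtain ⟨x₀, hx₀, hx₀a, hx₀p⟩ := exists_isCompactElement_le_not_le hgen hnot.1
  obtain ⟨y₀, hy₀, hy₀b, hy₀p⟩ := exists_isCompactElement_le_not_le hgen hnot.2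
  refine habφ (mul_le_of_forall_isCompactElement hd hgen fun x y hx hy hxa hyb => ?_)
  calc x * y ≤ (x ⊔ x₀) * (y ⊔ y₀) := mul_le_mul' le_sup_left le_sup_left
    _ ≤ φ p := h _ _ (hx.sup hx₀) (hy.sup hy₀)
      ((mul_le_mul' (sup_le hxa hx₀a) (sup_le hyb hy₀b)).trans hab)
      (fun hxp => hx₀p (le_sup_right.trans hxp)) (fun hyp => hy₀p (le_sup_right.trans hyp))

end IsCGMultLattice

theorem IsPhiDeltaPrimary.mul_le_phi_lradical (hL : IsCGMultLattice L) {φ : L → L} {q : L}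
    (hq : IsPhiDeltaPrimary φ (fun a : L => lradical a) q)
    (hrad : lradical (φ q) = φ (lradical q)) {x y : L} (hx : CompleteLattice.IsCompactElement x)
    (hy : CompleteLattice.IsCompactElement y) (hxy : x * y ≤ lradical q) (hxq : ¬ x ≤ lradical q)
    (hyq : ¬ y ≤ lradical q) : x * y ≤ φ (lradical q) := by
  have ⟨hd, htop, _, _, hmul⟩ := hL
  have hxyc := hmul x y hx hy
  obtain ⟨n, hn, hxyn⟩ := exists_pow_le_of_le_lradical hd htop hxyc hxy
  by_cases hφ : (x * y) ^ n ≤ φ q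
  · exact hrad ▸ le_lradical_of_pow_le hxyc hn hφ
  rw [mul_pow] at hxyn hφ
  rcases hq.2 _ _ hxyn hφ with hxn | hyn
  · exact absurd (le_lradical_of_pow_le hx hn hxn) hxq
  · exact absurd (hL.le_lradical_of_pow_le_lradical hy hn hyn) hyq

theorem radical_phiPrime_general (hL : IsCGMultLattice L)
    (φ : L → L)
    (q : L) (hq : IsPhiDeltaPrimary φ (fun a : L => lradical a) q)
    (hrad : lradical (φ q) = φ (lradical q)) :
    IsPhiPrime φ (lradical q) :=
  hL.isPhiPrime_of_forall_isCompactElement (hL.lradical_lt_one hq.1)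
    fun _ _ hx hy => hq.mul_le_phi_lradical hL hrad hx hy

theorem radical_phiPrime (hL : IsCGMultLattice L)
    (φ : L → L) (hφ : ∀ a : L, φ a ≤ a)
    (q : L) (hq : IsPhiDeltaPrimary φ (fun a : L => lradical a) q)
    (hrad : lradical (φ q) = φ (lradical q)) :
    IsPhiPrime φ (lradical q) :=
  radical_phiPrime_general hL φ q hq hrad
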